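/- arXiv:0802.2019 — 4 statements merged into one kernel-verified Lean document; each statement's English description precedes it below -/
import Mathlib

section
/- If ρ is a separable density operator on ℂ^{N_A} ⊗ ℂ^{N_B}, i.e. ρ = ∑_i p_i ρ_i^A ⊗ ρ_i^B with p_i ≥ 0, ∑ p_i = 1 and ρ_i^A, ρ_i^B density operators, then the trace norm of the realigned matrix ρ^R satisfies ‖ρ^R‖_tr ≤ 1. -/
/-
Write `vec X` for a matrix flattened into a vector. A separable state realigns to
`ρ^R = ∑ᵢ pᵢ vec(ρᵢ^A) vec(ρᵢ^B)ᵀ = B Cᵀ`, where the `i`-th columns of `B` and `C` are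
`√pᵢ vec(ρᵢ^A)` and `√pᵢ vec(ρᵢ^B)`. The trace norm of a product is at most the product of the
Frobenius norms: pairing the right singular vectors `vⱼ` with the left ones `uⱼ`,
`∑ⱼ σⱼ = ∑ⱼ ⟨Bᴴuⱼ, Cᵀvⱼ⟩`, and Cauchy–Schwarz together with Bessel's inequality bounds this by
`‖B‖_F ‖C‖_F`. Finally `‖B‖_F² = ∑ᵢ pᵢ ‖ρᵢ^A‖_F² ≤ 1`, because a positive semidefinite
`σ = XᴴX` has `‖σ‖_F ≤ ‖Xᴴ‖_F ‖X‖_F = tr σ`.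
-/

open Matrix Kronecker
open scoped ComplexOrder

/-- The realignment of a bipartite matrix: `ρ^R_{(mn)(μν)} := ρ_{(mμ)(nν)}`. -/
def realign {NA NB : ℕ} (ρ : Matrix (Fin NA × Fin NB) (Fin NA × Fin NB) ℂ) :
    Matrix (Fin NA × Fin NA) (Fin NB × Fin NB) ℂ :=
  Matrix.of fun p q => ρ (p.1, q.1) (p.2, q.2)

/-- The trace norm of a (rectangular) complex matrix: the sum of its singular values,
i.e. of the square roots of the eigenvalues of `AᴴA`. -/
noncomputable def traceNorm {m n : ℕ} (A : Matrix (Fin m × Fin m) (Fin n × Fin n) ℂ) : ℝ :=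
  ∑ j, Real.sqrt ((Matrix.posSemidef_conjTranspose_mul_self A).1.eigenvalues j)

attribute [local instance] Matrix.frobeniusNormedAddCommGroup

open InnerProductSpace

namespace Matrix

variable {𝕜 : Type*} [RCLike 𝕜] {l m n : Type*} [Fintype l] [Fintype m] [Fintype n]

lemma frobenius_norm_sq (A : Matrix m n 𝕜) : ‖A‖ ^ 2 = ∑ i, ∑ j, ‖A i j‖ ^ 2 := by
  change ‖WithLp.toLp 2 fun i => WithLp.toLp 2 (A i)‖ ^ 2 = _
  simp only [PiLp.norm_sq_eq_of_L2]

lemma trace_conjTranspose_mul_self (A : Matrix m n 𝕜) : (Aᴴ * A).trace = ((‖A‖ ^ 2 : ℝ) : 𝕜) := by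
  rw [frobenius_norm_sq, Finset.sum_comm]
  simp only [trace, diag, mul_apply, conjTranspose_apply, RCLike.star_def, RCLike.conj_mul]
  push_cast
  rfl

lemma PosSemidef.frobenius_norm_le_norm_trace [DecidableEq n] {σ : Matrix n n 𝕜}
    (hσ : σ.PosSemidef) : ‖σ‖ ≤ ‖σ.trace‖ := by
  obtain ⟨X, rfl⟩ : ∃ X : Matrix n n 𝕜, σ = star X * X := by
    open scoped MatrixOrder in exact CStarAlgebra.nonneg_iff_eq_star_mul_self.mp hσ.nonneg
  calc ‖Xᴴ * X‖ ≤ ‖Xᴴ‖ * ‖X‖ := frobenius_norm_mul _ _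
    _ = ‖(Xᴴ * X).trace‖ := by
      rw [trace_conjTranspose_mul_self, RCLike.norm_ofReal, abs_of_nonneg (by positivity),
        frobenius_norm_conjTranspose, sq]

lemma sum_norm_toEuclideanLin_sq_le [DecidableEq n] (A : Matrix m n 𝕜) {ι : Type*} [Fintype ι]
    {u : ι → EuclideanSpace 𝕜 n} (hu : Orthonormal 𝕜 u) :
    ∑ j, ‖toEuclideanLin A (u j)‖ ^ 2 ≤ ‖A‖ ^ 2 := by
  have hrow : ∀ i j, ‖(toEuclideanLin A (u j)) i‖ = ‖⟪u j, WithLp.toLp 2 (star (A i))⟫_𝕜‖ := by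
    intro i j
    rw [EuclideanSpace.inner_eq_star_dotProduct, ← norm_star]
    simp [mulVec, dotProduct]
  calc ∑ j, ‖toEuclideanLin A (u j)‖ ^ 2
      = ∑ i, ∑ j, ‖⟪u j, WithLp.toLp 2 (star (A i))⟫_𝕜‖ ^ 2 := by
        simp only [EuclideanSpace.norm_sq_eq, ← hrow]
        exact Finset.sum_comm
    _ ≤ ∑ i, ‖WithLp.toLp 2 (star (A i))‖ ^ 2 :=
        Finset.sum_le_sum fun i _ => hu.sum_inner_products_le _
    _ = ‖A‖ ^ 2 := by simp [EuclideanSpace.norm_sq_eq, frobenius_norm_sq]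

lemma inner_toEuclideanLin_mul [DecidableEq l] [DecidableEq m] [DecidableEq n]
    (B : Matrix m l 𝕜) (C : Matrix l n 𝕜) (x : EuclideanSpace 𝕜 m) (y : EuclideanSpace 𝕜 n) :
    ⟪x, toEuclideanLin (B * C) y⟫_𝕜 = ⟪toEuclideanLin Bᴴ x, toEuclideanLin C y⟫_𝕜 := by
  rw [toEuclideanLin_conjTranspose_eq_adjoint, LinearMap.adjoint_inner_left, toLpLin_mul 2 2]
  rfl

lemma sum_norm_inner_toEuclideanLin_mul_le [DecidableEq l] [DecidableEq m] [DecidableEq n]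
    (B : Matrix m l 𝕜) (C : Matrix l n 𝕜) {ι : Type*} [Fintype ι]
    {u : ι → EuclideanSpace 𝕜 m} {v : ι → EuclideanSpace 𝕜 n}
    (hu : Orthonormal 𝕜 u) (hv : Orthonormal 𝕜 v) :
    ∑ j, ‖⟪u j, toEuclideanLin (B * C) (v j)⟫_𝕜‖ ≤ ‖B‖ * ‖C‖ := by
  calc ∑ j, ‖⟪u j, toEuclideanLin (B * C) (v j)⟫_𝕜‖
      ≤ ∑ j, ‖toEuclideanLin Bᴴ (u j)‖ * ‖toEuclideanLin C (v j)‖ := by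
        gcongr with j
        rw [inner_toEuclideanLin_mul]
        exact norm_inner_le_norm _ _
    _ ≤ √(∑ j, ‖toEuclideanLin Bᴴ (u j)‖ ^ 2) * √(∑ j, ‖toEuclideanLin C (v j)‖ ^ 2) :=
        Real.sum_mul_le_sqrt_mul_sqrt _ _ _
    _ ≤ √(‖Bᴴ‖ ^ 2) * √(‖C‖ ^ 2) := by
        gcongr
        · exact sum_norm_toEuclideanLin_sq_le _ hu
        · exact sum_norm_toEuclideanLin_sq_le _ hv
    _ = ‖B‖ * ‖C‖ := by
        rw [frobenius_norm_conjTranspose, Real.sqrt_sq (norm_nonneg _),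
          Real.sqrt_sq (norm_nonneg _)]

section SingularVectors

variable [DecidableEq n] (M : Matrix m n 𝕜) (hM : (Mᴴ * M).IsHermitian)

/-- For a zero eigenvalue this is the junk value `0`, so these vectors are orthonormal only on the
support of the eigenvalues. -/
noncomputable def leftSingularVector (j : n) : EuclideanSpace 𝕜 m :=
  ((√(hM.eigenvalues j) : ℝ) : 𝕜)⁻¹ • toEuclideanLin M (hM.eigenvectorBasis j)

lemma inner_toEuclideanLin_eigenvectorBasis [DecidableEq m] (i j : n) :
    ⟪toEuclideanLin M (hM.eigenvectorBasis i), toEuclideanLin M (hM.eigenvectorBasis j)⟫_𝕜 =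
      if i = j then (hM.eigenvalues i : 𝕜) else 0 := by
  have hj : toEuclideanLin Mᴴ (toEuclideanLin M (hM.eigenvectorBasis j)) =
      (hM.eigenvalues j : 𝕜) • hM.eigenvectorBasis j := by
    rw [← LinearMap.comp_apply, ← toLpLin_mul]
    apply WithLp.ofLp_injective
    rw [ofLp_toLpLin, toLin'_apply, WithLp.ofLp_smul, hM.mulVec_eigenvectorBasis,
      RCLike.real_smul_eq_coe_smul (K := 𝕜)]
  rw [← LinearMap.adjoint_inner_right, ← toEuclideanLin_conjTranspose_eq_adjoint, hj,
    inner_smul_right, orthonormal_iff_ite.mp hM.eigenvectorBasis.orthonormal]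
  split_ifs with h <;> simp [h]

lemma inner_leftSingularVector_toEuclideanLin [DecidableEq m] (j : n) :
    ⟪leftSingularVector M hM j, toEuclideanLin M (hM.eigenvectorBasis j)⟫_𝕜 =
      ((√(hM.eigenvalues j) : ℝ) : 𝕜) := by
  have h0 : 0 ≤ hM.eigenvalues j := eigenvalues_conjTranspose_mul_self_nonneg M j
  rw [leftSingularVector, inner_smul_left, inner_toEuclideanLin_eigenvectorBasis, if_pos rfl,
    ← Real.mul_self_sqrt h0]
  by_cases h : √(hM.eigenvalues j) = 0 <;> simp [h]

lemma orthonormal_leftSingularVector [DecidableEq m] :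
    Orthonormal 𝕜 fun j : {j // hM.eigenvalues j ≠ 0} => leftSingularVector M hM j := by
  rw [orthonormal_iff_ite]
  rintro ⟨i, hi⟩ ⟨j, -⟩
  simp only [leftSingularVector, inner_smul_left, inner_smul_right,
    inner_toEuclideanLin_eigenvectorBasis, Subtype.mk.injEq]
  split_ifs with h
  · subst h
    have hpos : 0 < hM.eigenvalues i := (eigenvalues_conjTranspose_mul_self_nonneg M i).lt_of_ne' hi
    have hs : ((√(hM.eigenvalues i) : ℝ) : 𝕜) ≠ 0 := by exact_mod_cast (Real.sqrt_pos.2 hpos).ne'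
    have hsq : (hM.eigenvalues i : 𝕜) = (√(hM.eigenvalues i) : ℝ) * (√(hM.eigenvalues i) : ℝ) := by
      rw [← RCLike.ofReal_mul, Real.mul_self_sqrt hpos.le]
    rw [hsq, map_inv₀, RCLike.conj_ofReal]
    field_simp
  · simp

end SingularVectors

lemma sum_sqrt_eigenvalues_le_frobenius_mul [DecidableEq l] [DecidableEq m] [DecidableEq n]
    (B : Matrix m l 𝕜) (C : Matrix l n 𝕜) (hBC : ((B * C)ᴴ * (B * C)).IsHermitian) :
    ∑ j, √(hBC.eigenvalues j) ≤ ‖B‖ * ‖C‖ := by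
  let S := {j // hBC.eigenvalues j ≠ 0}
  calc ∑ j, √(hBC.eigenvalues j) = ∑ j : S, √(hBC.eigenvalues j) := by
        rw [← Fintype.sum_subtype_add_sum_subtype (fun j => hBC.eigenvalues j ≠ 0), add_eq_left]
        exact Finset.sum_eq_zero fun j _ => by rw [not_not.mp j.2, Real.sqrt_zero]
    _ = ∑ j : S, ‖⟪leftSingularVector (B * C) hBC j,
          toEuclideanLin (B * C) (hBC.eigenvectorBasis j)⟫_𝕜‖ := by
        simp only [inner_leftSingularVector_toEuclideanLin, RCLike.norm_ofReal,
          abs_of_nonneg (Real.sqrt_nonneg _)]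
    _ ≤ ‖B‖ * ‖C‖ := sum_norm_inner_toEuclideanLin_mul_le B C
        (orthonormal_leftSingularVector (B * C) hBC)
        (hBC.eigenvectorBasis.orthonormal.comp _ Subtype.val_injective)

end Matrix

lemma traceNorm_mul_le {m n : ℕ} {k : Type*} [Fintype k] [DecidableEq k]
    (B : Matrix (Fin m × Fin m) k ℂ) (C : Matrix k (Fin n × Fin n) ℂ) :
    traceNorm (B * C) ≤ ‖B‖ * ‖C‖ :=
  sum_sqrt_eigenvalues_le_frobenius_mul B C _

noncomputable def sqrtWeightedVecs {𝕜 ι a : Type*} [RCLike 𝕜] (p : ι → ℝ) (σ : ι → Matrix a a 𝕜) :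
    Matrix (a × a) ι 𝕜 :=
  of fun q i => ((√(p i) : ℝ) : 𝕜) * σ i q.1 q.2

lemma realign_sum_smul_kronecker {NA NB : ℕ} {ι : Type*} [Fintype ι] {p : ι → ℝ}
    (hp : ∀ i, 0 ≤ p i) (A : ι → Matrix (Fin NA) (Fin NA) ℂ) (B : ι → Matrix (Fin NB) (Fin NB) ℂ) :
    realign (∑ i, (p i : ℂ) • (A i ⊗ₖ B i)) = sqrtWeightedVecs p A * (sqrtWeightedVecs p B)ᵀ := by
  ext q r
  simp only [realign, sqrtWeightedVecs, of_apply, Matrix.sum_apply, Matrix.smul_apply,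
    kroneckerMap_apply, mul_apply, transpose_apply, smul_eq_mul]
  refine Finset.sum_congr rfl fun i _ => ?_
  have hsq : ((√(p i) : ℝ) : ℂ) * (√(p i) : ℝ) = p i := by
    rw [← Complex.ofReal_mul, Real.mul_self_sqrt (hp i)]
  linear_combination (A i q.1 q.2 * B i r.1 r.2) * hsq.symm

lemma frobenius_norm_sqrtWeightedVecs_le_one {𝕜 ι a : Type*} [RCLike 𝕜] [Fintype ι] [Fintype a]
    {p : ι → ℝ} (hp : ∀ i, 0 ≤ p i) (hpsum : ∑ i, p i = 1) {σ : ι → Matrix a a 𝕜}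
    (hσ : ∀ i, ‖σ i‖ ≤ 1) : ‖sqrtWeightedVecs p σ‖ ≤ 1 := by
  refine (sq_le_one_iff₀ (norm_nonneg _)).mp ?_
  calc ‖sqrtWeightedVecs p σ‖ ^ 2 = ∑ i, p i * ‖σ i‖ ^ 2 := by
        rw [frobenius_norm_sq, Finset.sum_comm]
        simp only [sqrtWeightedVecs, of_apply, norm_mul, RCLike.norm_ofReal, mul_pow, sq_abs,
          Real.sq_sqrt (hp _), Fintype.sum_prod_type, frobenius_norm_sq, Finset.mul_sum]
    _ ≤ ∑ i, p i * 1 := by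
        gcongr with i
        · exact hp i
        · exact pow_le_one₀ (norm_nonneg _) (hσ i)
    _ = 1 := by simp [hpsum]

/-- (Realignment / computable cross norm criterion.) If `ρ` is a separable
density operator on `ℂ^{N_A} ⊗ ℂ^{N_B}`, i.e. `ρ = ∑ᵢ pᵢ ρᵢ^A ⊗ ρᵢ^B` with `pᵢ ≥ 0`,
`∑ pᵢ = 1` and `ρᵢ^A, ρᵢ^B` density operators, then the trace norm of the realigned matrix
`ρ^R` satisfies `‖ρ^R‖_tr ≤ 1`. -/
theorem stmt_5 (NA NB : ℕ)
    (ρ : Matrix (Fin NA × Fin NB) (Fin NA × Fin NB) ℂ)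
    (n : ℕ) (p : Fin n → ℝ)
    (ρA : Fin n → Matrix (Fin NA) (Fin NA) ℂ)
    (ρB : Fin n → Matrix (Fin NB) (Fin NB) ℂ)
    (hp : ∀ i, 0 ≤ p i) (hpsum : ∑ i, p i = 1)
    (hA : ∀ i, (ρA i).PosSemidef ∧ (ρA i).trace = 1)
    (hB : ∀ i, (ρB i).PosSemidef ∧ (ρB i).trace = 1)
    (hsep : ρ = ∑ i, (p i : ℂ) • (ρA i ⊗ₖ ρB i)) :
    traceNorm (realign ρ) ≤ 1 := by
  have hnormA (i : Fin n) : ‖ρA i‖ ≤ 1 := by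
    simpa [(hA i).2] using (hA i).1.frobenius_norm_le_norm_trace
  have hnormB (i : Fin n) : ‖ρB i‖ ≤ 1 := by
    simpa [(hB i).2] using (hB i).1.frobenius_norm_le_norm_trace
  rw [hsep, realign_sum_smul_kronecker hp]
  calc traceNorm (sqrtWeightedVecs p ρA * (sqrtWeightedVecs p ρB)ᵀ)
      ≤ ‖sqrtWeightedVecs p ρA‖ * ‖(sqrtWeightedVecs p ρB)ᵀ‖ := traceNorm_mul_le _ _
    _ ≤ 1 * 1 := by
        rw [frobenius_norm_transpose]
        gcongr
        · exact frobenius_norm_sqrtWeightedVecs_le_one hp hpsum hnormA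
        · exact frobenius_norm_sqrtWeightedVecs_le_one hp hpsum hnormB
    _ = 1 := one_mul 1
end

section
/- Let T be a linear map on the real Hilbert space of Hermitian operators on a finite-dimensional Hilbert space H that is positive (maps positive semidefinite operators to positive semidefinite operators) and unitary with respect to the Hilbert–Schmidt inner product. Then T maps the cone of positive semidefinite operators onto itself, and its adjoint T† is also a positive map. -/
open Matrix
open scoped ComplexOrder

/-!
The positive semidefinite cone is self-dual for the pairing `⟨A, B⟩ = Tr (A B)`: a Hermitian `A`
is positive semidefinite iff `Tr (A P) ≥ 0` for every positive semidefinite `P` (test against the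
rank-one projections `x x⋆`). An orthogonal `T` is injective, hence bijective. If `T A = B ≥ 0`,
then `Tr (A P) = Tr (B (T P)) ≥ 0` for all `P ≥ 0`, so `A ≥ 0`; and for the adjoint,
`Tr (P (T† B)) = Tr ((T P) B) ≥ 0`.
-/

namespace Matrix

variable {n 𝕜 : Type*} [Fintype n] [RCLike 𝕜]

open scoped MatrixOrder in
lemma PosSemidef.trace_mul_nonneg {A B : Matrix n n 𝕜} (hA : A.PosSemidef) (hB : B.PosSemidef) :
    0 ≤ (A * B).trace := by
  classical
  obtain ⟨C, rfl⟩ := CStarAlgebra.nonneg_iff_eq_star_mul_self.mp hB.nonneg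
  rw [star_eq_conjTranspose, ← mul_assoc, trace_mul_comm]
  simpa only [mul_assoc] using (hA.mul_mul_conjTranspose_same C).trace_nonneg

lemma trace_mul_vecMulVec_star (A : Matrix n n 𝕜) (x : n → 𝕜) :
    (A * vecMulVec x (star x)).trace = star x ⬝ᵥ A *ᵥ x := by
  rw [mul_vecMulVec, trace_vecMulVec, dotProduct_comm]

lemma PosSemidef.of_forall_trace_mul_nonneg {A : Matrix n n 𝕜} (hA : A.IsHermitian)
    (h : ∀ P : Matrix n n 𝕜, P.PosSemidef → 0 ≤ (A * P).trace) : A.PosSemidef :=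
  .of_dotProduct_mulVec_nonneg hA fun x ↦
    trace_mul_vecMulVec_star A x ▸ h _ (posSemidef_vecMulVec_self_star x)

lemma selfAdjoint_eq_zero_of_trace_mul_self_eq_zero {A : selfAdjoint (Matrix n n 𝕜)}
    (h : ((A : Matrix n n 𝕜) * A).trace = 0) : A = 0 := by
  have hA : (A : Matrix n n 𝕜)ᴴ = A := A.2
  refine Subtype.ext (trace_conjTranspose_mul_self_eq_zero_iff.mp ?_)
  rwa [hA]

instance : FiniteDimensional ℝ (selfAdjoint (Matrix n n 𝕜)) :=
  inferInstanceAs (FiniteDimensional ℝ (selfAdjoint.submodule ℝ (Matrix n n 𝕜)))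

lemma bijective_of_trace_mul_map_map
    (T : selfAdjoint (Matrix n n 𝕜) →ₗ[ℝ] selfAdjoint (Matrix n n 𝕜))
    (hT : ∀ A B : selfAdjoint (Matrix n n 𝕜),
      ((T A : Matrix n n 𝕜) * T B).trace = ((A : Matrix n n 𝕜) * B).trace) :
    Function.Bijective T := by
  have hinj : Function.Injective T := by
    refine (injective_iff_map_eq_zero T).mpr fun A hA ↦
      selfAdjoint_eq_zero_of_trace_mul_self_eq_zero ?_
    rw [← hT, hA, ZeroMemClass.coe_zero, zero_mul, trace_zero]
  exact ⟨hinj, LinearMap.injective_iff_surjective.mp hinj⟩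

variable {T : selfAdjoint (Matrix n n 𝕜) →ₗ[ℝ] selfAdjoint (Matrix n n 𝕜)}

lemma posSemidef_of_posSemidef_map
    (hpos : ∀ A : selfAdjoint (Matrix n n 𝕜), (A : Matrix n n 𝕜).PosSemidef →
      (T A : Matrix n n 𝕜).PosSemidef)
    (hT : ∀ A B : selfAdjoint (Matrix n n 𝕜),
      ((T A : Matrix n n 𝕜) * T B).trace = ((A : Matrix n n 𝕜) * B).trace)
    {A : selfAdjoint (Matrix n n 𝕜)} (hA : (T A : Matrix n n 𝕜).PosSemidef) :
    (A : Matrix n n 𝕜).PosSemidef :=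
  .of_forall_trace_mul_nonneg A.2 fun P hP ↦
    hT A ⟨P, hP.1⟩ ▸ hA.trace_mul_nonneg (hpos ⟨P, hP.1⟩ hP)

lemma posSemidef_map_of_trace_adjoint
    (hpos : ∀ A : selfAdjoint (Matrix n n 𝕜), (A : Matrix n n 𝕜).PosSemidef →
      (T A : Matrix n n 𝕜).PosSemidef)
    {S : selfAdjoint (Matrix n n 𝕜) →ₗ[ℝ] selfAdjoint (Matrix n n 𝕜)}
    (hS : ∀ A B : selfAdjoint (Matrix n n 𝕜),
      ((T A : Matrix n n 𝕜) * B).trace = ((A : Matrix n n 𝕜) * S B).trace)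
    {B : selfAdjoint (Matrix n n 𝕜)} (hB : (B : Matrix n n 𝕜).PosSemidef) :
    (S B : Matrix n n 𝕜).PosSemidef :=
  .of_forall_trace_mul_nonneg (S B).2 fun P hP ↦ by
    rw [trace_mul_comm, ← hS ⟨P, hP.1⟩]
    exact (hpos ⟨P, hP.1⟩ hP).trace_mul_nonneg hB

end Matrix

/-- Let `T` be a linear map on the real Hilbert space of Hermitian
operators on a finite-dimensional Hilbert space that is positive (maps positive
semidefinite operators to positive semidefinite operators) and unitary with respect to the
Hilbert–Schmidt inner product `⟨A,B⟩ = Tr(AB)`. Then `T` maps the cone of positive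
semidefinite operators onto itself, and its adjoint `T†` is also a positive map. -/
theorem stmt_9 (N : ℕ)
    (T : selfAdjoint (Matrix (Fin N) (Fin N) ℂ) →ₗ[ℝ]
      selfAdjoint (Matrix (Fin N) (Fin N) ℂ))
    (hpos : ∀ A : selfAdjoint (Matrix (Fin N) (Fin N) ℂ),
      ((A : Matrix (Fin N) (Fin N) ℂ)).PosSemidef →
      ((T A : Matrix (Fin N) (Fin N) ℂ)).PosSemidef)
    (hunit : ∀ A B : selfAdjoint (Matrix (Fin N) (Fin N) ℂ),
      ((T A : Matrix (Fin N) (Fin N) ℂ) * (T B : Matrix (Fin N) (Fin N) ℂ)).trace =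
      ((A : Matrix (Fin N) (Fin N) ℂ) * (B : Matrix (Fin N) (Fin N) ℂ)).trace) :
    (∀ B : selfAdjoint (Matrix (Fin N) (Fin N) ℂ),
      ((B : Matrix (Fin N) (Fin N) ℂ)).PosSemidef →
      ∃ A : selfAdjoint (Matrix (Fin N) (Fin N) ℂ),
        ((A : Matrix (Fin N) (Fin N) ℂ)).PosSemidef ∧ T A = B) ∧
    (∀ S : selfAdjoint (Matrix (Fin N) (Fin N) ℂ) →ₗ[ℝ]
        selfAdjoint (Matrix (Fin N) (Fin N) ℂ),
      (∀ A B : selfAdjoint (Matrix (Fin N) (Fin N) ℂ),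
        ((T A : Matrix (Fin N) (Fin N) ℂ) * (B : Matrix (Fin N) (Fin N) ℂ)).trace =
        ((A : Matrix (Fin N) (Fin N) ℂ) * (S B : Matrix (Fin N) (Fin N) ℂ)).trace) →
      ∀ B : selfAdjoint (Matrix (Fin N) (Fin N) ℂ),
        ((B : Matrix (Fin N) (Fin N) ℂ)).PosSemidef →
        ((S B : Matrix (Fin N) (Fin N) ℂ)).PosSemidef) := by
  refine ⟨fun B hB ↦ ?_, fun S hS B hB ↦ posSemidef_map_of_trace_adjoint hpos hS hB⟩
  obtain ⟨A, rfl⟩ := (bijective_of_trace_mul_map_map T hunit).2 B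
  exact ⟨A, posSemidef_of_posSemidef_map hpos hunit hB, rfl⟩
end

section
/- A completely positive trace-preserving map E from system B to system A is entanglement breaking if and only if the Choi–Jamiołkowski state ρ = (E ⊗ I)(|φ⟩⟨φ|), where |φ⟩ = (1/√N_B) ∑_α |α⟩|α⟩ is maximally entangled, is separable. -/
open Matrix Kronecker
open scoped ComplexOrder

/-- The map `E ⊗ I` acting on a bipartite matrix on `ℂ^{N_B} ⊗ ℂ^K`, where `E` acts on
matrices on `ℂ^{N_B}` and produces matrices on `ℂ^{N_A}`. -/
def tensorId {NA NB K : ℕ}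
    (E : Matrix (Fin NB) (Fin NB) ℂ →ₗ[ℂ] Matrix (Fin NA) (Fin NA) ℂ)
    (M : Matrix (Fin NB × Fin K) (Fin NB × Fin K) ℂ) :
    Matrix (Fin NA × Fin K) (Fin NA × Fin K) ℂ :=
  Matrix.of fun p q => E (Matrix.of fun a b => M (a, p.2) (b, q.2)) p.1 q.1

/-- A bipartite matrix is separable if it is a convex combination of (density-operator)
product states. -/
def IsSeparableState {NA K : ℕ} (M : Matrix (Fin NA × Fin K) (Fin NA × Fin K) ℂ) : Prop :=
  ∃ (n : ℕ) (p : Fin n → ℝ) (A : Fin n → Matrix (Fin NA) (Fin NA) ℂ)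
    (B : Fin n → Matrix (Fin K) (Fin K) ℂ),
    (∀ i, 0 ≤ p i) ∧ (∑ i, p i) = 1 ∧
    (∀ i, (A i).PosSemidef ∧ (A i).trace = 1) ∧
    (∀ i, (B i).PosSemidef ∧ (B i).trace = 1) ∧
    M = ∑ i, (p i : ℂ) • (A i ⊗ₖ B i)

/-- `E` is completely positive: `E ⊗ I_K` preserves positive semidefiniteness for all `K`. -/
def IsCompletelyPositive {NA NB : ℕ}
    (E : Matrix (Fin NB) (Fin NB) ℂ →ₗ[ℂ] Matrix (Fin NA) (Fin NA) ℂ) : Prop :=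
  ∀ (K : ℕ) (M : Matrix (Fin NB × Fin K) (Fin NB × Fin K) ℂ),
    M.PosSemidef → (tensorId E M).PosSemidef

/-- `E` is entanglement breaking: `E ⊗ I` maps every state to a separable state. -/
def IsEntanglementBreaking {NA NB : ℕ}
    (E : Matrix (Fin NB) (Fin NB) ℂ →ₗ[ℂ] Matrix (Fin NA) (Fin NA) ℂ) : Prop :=
  ∀ (K : ℕ) (σ : Matrix (Fin NB × Fin K) (Fin NB × Fin K) ℂ),
    σ.PosSemidef → σ.trace = 1 → IsSeparableState (tensorId E σ)

/-- The Choi–Jamiołkowski state `(E ⊗ I)(|φ⟩⟨φ|)`, with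
`|φ⟩ = (1/√N_B) ∑_α |α⟩|α⟩` maximally entangled. -/
noncomputable def choiState {NA NB : ℕ}
    (E : Matrix (Fin NB) (Fin NB) ℂ →ₗ[ℂ] Matrix (Fin NA) (Fin NA) ℂ) :
    Matrix (Fin NA × Fin NB) (Fin NA × Fin NB) ℂ :=
  tensorId E (Matrix.of fun p q =>
    if p.1 = p.2 ∧ q.1 = q.2 then (1 / (NB : ℂ)) else 0)

/-! If `E` is entanglement breaking, its Choi state is separable because the maximally entangled
state is a state. Conversely, write the separable Choi state as `∑ᵢ Aᵢ ⊗ Bᵢ` with `Aᵢ` states and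
`Bᵢ ≥ 0`. Since `E(|α⟩⟨β|) = N_B ⟨a, α| ρ |b, β⟩`, the map has the measure-and-prepare form
`E(X) = N_B ∑ᵢ tr(Bᵢᵀ X) Aᵢ`, hence `(E ⊗ I)(σ) = ∑ᵢ Aᵢ ⊗ N_B Tr₁[(Bᵢᵀ ⊗ 1) σ]`. The second
factors are positive by the Schur product theorem, and normalizing each by its trace gives
weights summing to `tr σ = 1`, because `E` preserves the trace. -/

namespace Matrix

variable {ι m κ : Type*} [Fintype ι] [Fintype m] [Fintype κ]

theorem PosSemidef.exists_eq_smul_density [DecidableEq ι] [Nonempty ι] {C : Matrix ι ι ℂ}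
    (hC : C.PosSemidef) :
    ∃ t : ℝ, 0 ≤ t ∧ ∃ ρ : Matrix ι ι ℂ, (ρ.PosSemidef ∧ ρ.trace = 1) ∧ C = (t : ℂ) • ρ := by
  by_cases h0 : C = 0
  · refine ⟨0, le_rfl, diagonal (Pi.single (Classical.arbitrary ι) 1), ⟨?_, by simp⟩, by simp [h0]⟩
    exact PosSemidef.diagonal (Pi.single_nonneg.mpr zero_le_one)
  · set t := C.trace.re
    have htr : C.trace = t := Complex.eq_re_of_ofReal_le (r := 0) (by simpa using hC.trace_nonneg)
    have ht0 : 0 ≤ t := (Complex.nonneg_iff.mp hC.trace_nonneg).1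
    have ht : t ≠ 0 := fun ht => h0 (hC.trace_eq_zero_iff.mp (by simp [htr, ht]))
    have ht' : (t : ℂ) ≠ 0 := by exact_mod_cast ht
    refine ⟨t, ht0, (t : ℂ)⁻¹ • C, ⟨hC.smul (inv_nonneg.mpr (by exact_mod_cast ht0)), ?_⟩, ?_⟩
    · rw [trace_smul, htr, smul_eq_mul, inv_mul_cancel₀ ht']
    · rw [smul_smul, mul_inv_cancel₀ ht', one_smul]

/-- `Tr₁[(Bᵀ ⊗ 1) σ]`: the first tensor factor of `σ` paired against `B`. -/
def partialContract (B : Matrix m m ℂ) (σ : Matrix (m × κ) (m × κ) ℂ) : Matrix κ κ ℂ :=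
  of fun k l => ∑ α, ∑ β, B α β * σ (α, k) (β, l)

theorem partialContract_eq_conjTranspose_mul_hadamard_mul [DecidableEq κ] (B : Matrix m m ℂ)
    (σ : Matrix (m × κ) (m × κ) ℂ) :
    partialContract B σ =
      (of fun (q : m × κ) l => (1 : Matrix κ κ ℂ) q.2 l)ᴴ *
        ((B ⊗ₖ of fun _ _ => 1) ⊙ σ) * of fun (q : m × κ) l => (1 : Matrix κ κ ℂ) q.2 l := by
  ext k l
  rw [partialContract, of_apply, Finset.sum_comm]
  simp [mul_apply, Fintype.sum_prod_type, one_apply]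

theorem PosSemidef.partialContract {B : Matrix m m ℂ} {σ : Matrix (m × κ) (m × κ) ℂ}
    (hB : B.PosSemidef) (hσ : σ.PosSemidef) : (partialContract B σ).PosSemidef := by
  classical
  have hJ : (of fun _ _ => 1 : Matrix κ κ ℂ).PosSemidef := by
    simpa [vecMulVec] using posSemidef_vecMulVec_self_star (fun _ : κ => (1 : ℂ))
  rw [partialContract_eq_conjTranspose_mul_hadamard_mul]
  exact ((hB.kronecker hJ).hadamard hσ).conjTranspose_mul_mul_same _

end Matrix

theorem LinearMap.map_eq_sum_single {R M m n : Type*} [CommSemiring R] [AddCommMonoid M]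
    [Module R M] [Fintype m] [Fintype n] [DecidableEq m] [DecidableEq n]
    (f : Matrix m n R →ₗ[R] M) (X : Matrix m n R) :
    f X = ∑ i, ∑ j, X i j • f (Matrix.single i j 1) := by
  conv_lhs => rw [matrix_eq_sum_single X]
  simp [map_sum, ← map_smul]

theorem isSeparableState_of_eq_sum_kronecker {NA K n : ℕ}
    {M : Matrix (Fin NA × Fin K) (Fin NA × Fin K) ℂ} {A : Fin n → Matrix (Fin NA) (Fin NA) ℂ}
    {C : Fin n → Matrix (Fin K) (Fin K) ℂ} (hA : ∀ i, (A i).PosSemidef ∧ (A i).trace = 1)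
    (hC : ∀ i, (C i).PosSemidef) (hM : M = ∑ i, A i ⊗ₖ C i) (htr : M.trace = 1) :
    IsSeparableState M := by
  have : Nonempty (Fin K) := by
    by_contra hK
    have : IsEmpty (Fin NA × Fin K) := by simpa using Or.inr hK
    simp [trace_eq_zero_of_isEmpty] at htr
  choose t ht ρ hρ hCρ using fun i => (hC i).exists_eq_smul_density
  have hM' : M = ∑ i, (t i : ℂ) • (A i ⊗ₖ ρ i) := by simp_rw [hM, hCρ, kronecker_smul]
  refine ⟨n, t, A, ρ, ht, ?_, hA, hρ, hM'⟩
  have : ((∑ i, t i : ℝ) : ℂ) = 1 := by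
    simpa [hM', trace_sum, trace_kronecker, hA, hρ] using htr
  exact_mod_cast this

noncomputable def maximallyEntangledState (N : ℕ) : Matrix (Fin N × Fin N) (Fin N × Fin N) ℂ :=
  of fun p q => if p.1 = p.2 ∧ q.1 = q.2 then 1 / (N : ℂ) else 0

theorem maximallyEntangledState_posSemidef (N : ℕ) : (maximallyEntangledState N).PosSemidef := by
  set v : Fin N × Fin N → ℂ := fun p => if p.1 = p.2 then 1 else 0 with hv
  have : maximallyEntangledState N = (1 / (N : ℂ)) • vecMulVec v (star v) := by
    ext p q
    by_cases hp : p.1 = p.2 <;> by_cases hq : q.1 = q.2 <;>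
      simp [maximallyEntangledState, vecMulVec, hv, hp, hq]
  rw [this]
  exact (posSemidef_vecMulVec_self_star _).smul (by positivity)

theorem maximallyEntangledState_trace {N : ℕ} (hN : N ≠ 0) :
    (maximallyEntangledState N).trace = 1 := by
  simp [maximallyEntangledState, trace, Fintype.sum_prod_type, hN]

section Channel

variable {NA NB : ℕ} (E : Matrix (Fin NB) (Fin NB) ℂ →ₗ[ℂ] Matrix (Fin NA) (Fin NA) ℂ)

theorem choiState_eq_tensorId : choiState E = tensorId E (maximallyEntangledState NB) := rfl

theorem trace_tensorId (htp : ∀ M, (E M).trace = M.trace) {K : ℕ}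
    (σ : Matrix (Fin NB × Fin K) (Fin NB × Fin K) ℂ) : (tensorId E σ).trace = σ.trace := by
  simp only [trace, diag, tensorId, of_apply, Fintype.sum_prod_type]
  rw [Finset.sum_comm]
  conv_rhs => rw [Finset.sum_comm]
  exact Finset.sum_congr rfl fun k _ => htp _

theorem choiState_apply (a b : Fin NA) (α β : Fin NB) :
    choiState E (a, α) (b, β) = (NB : ℂ)⁻¹ * E (single α β 1) a b := by
  have : (of fun a' b' => if a' = α ∧ b' = β then 1 / (NB : ℂ) else 0) =
      (NB : ℂ)⁻¹ • single α β 1 := by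
    ext a' b'
    simp [single, eq_comm]
  change E (of fun a' b' => if a' = α ∧ b' = β then 1 / (NB : ℂ) else 0) a b = _
  rw [this, map_smul]
  rfl

theorem tensorId_eq_sum_kronecker_partialContract (hNB : NB ≠ 0) {ι : Type*} [Fintype ι]
    {A : ι → Matrix (Fin NA) (Fin NA) ℂ} {B : ι → Matrix (Fin NB) (Fin NB) ℂ}
    (hchoi : choiState E = ∑ i, A i ⊗ₖ B i) {K : ℕ}
    (σ : Matrix (Fin NB × Fin K) (Fin NB × Fin K) ℂ) :
    tensorId E σ = ∑ i, A i ⊗ₖ ((NB : ℂ) • partialContract (B i) σ) := by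
  have hE : ∀ α β a b, E (single α β 1) a b = NB * ∑ i, A i a b * B i α β := by
    intro α β a b
    have := choiState_apply E a b α β
    rw [hchoi, Matrix.sum_apply] at this
    simp only [kroneckerMap_apply] at this
    rw [this, mul_inv_cancel_left₀ (Nat.cast_ne_zero.mpr hNB)]
  ext ⟨a, k⟩ ⟨b, l⟩
  simp only [tensorId, of_apply]
  rw [LinearMap.map_eq_sum_single]
  simp only [of_apply, Matrix.sum_apply, Matrix.smul_apply, hE, Finset.mul_sum, smul_eq_mul,
    partialContract, smul_of, kroneckerMap_apply, Pi.smul_apply]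
  conv_rhs => rw [Finset.sum_comm]; enter [2, α]; rw [Finset.sum_comm]
  exact Finset.sum_congr rfl fun _ _ => Finset.sum_congr rfl fun _ _ =>
    Finset.sum_congr rfl fun _ _ => by ring

end Channel

theorem stmt_16_general (NA NB : ℕ) (hB : 1 ≤ NB)
    (E : Matrix (Fin NB) (Fin NB) ℂ →ₗ[ℂ] Matrix (Fin NA) (Fin NA) ℂ)
    (htp : ∀ M, (E M).trace = M.trace) :
    IsEntanglementBreaking E ↔ IsSeparableState (choiState E) := by
  have hNB : NB ≠ 0 := by omega
  constructor
  · intro hEB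
    rw [choiState_eq_tensorId]
    exact hEB NB _ (maximallyEntangledState_posSemidef NB) (maximallyEntangledState_trace hNB)
  · rintro ⟨n, p, A, B, hp, -, hA, hBstate, hchoi⟩ K σ hσ hσtr
    simp_rw [← kronecker_smul] at hchoi
    refine isSeparableState_of_eq_sum_kronecker hA (fun i => ?_)
      (tensorId_eq_sum_kronecker_partialContract E hNB hchoi σ)
      ((trace_tensorId E htp σ).trans hσtr)
    exact (((hBstate i).1.smul (by exact_mod_cast hp i)).partialContract hσ).smul (by positivity)

/-- A completely positive trace-preserving map `E` from system B to
system A is entanglement breaking if and only if its Choi–Jamiołkowski state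
`ρ = (E ⊗ I)(|φ⟩⟨φ|)` is separable. -/
theorem stmt_16 (NA NB : ℕ) (hB : 1 ≤ NB)
    (E : Matrix (Fin NB) (Fin NB) ℂ →ₗ[ℂ] Matrix (Fin NA) (Fin NA) ℂ)
    (hcp : IsCompletelyPositive E)
    (htp : ∀ M, (E M).trace = M.trace) :
    IsEntanglementBreaking E ↔ IsSeparableState (choiState E) :=
  stmt_16_general NA NB hB E htp
end

section
/- If a CPT map E : M_{N_B}(ℂ) → M_{N_A}(ℂ) is entanglement breaking and its matrix representation 𝓔 (on the standard operator bases) has full rank d = min(N_A², N_B²) with N_A = N_B, then det|𝓔| ≤ (N_B/d)^d, where |𝓔| = √(𝓔†𝓔); equivalently the volume-contraction rate of E is at most (N_B/d)^d. -/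
/-!
Let `σ = |Φ⟩⟨Φ|/N` be the maximally entangled state. Entrywise, `𝓔` is `N` times the realignment
of the Choi state `(E ⊗ I) σ`, so a separable decomposition `(E ⊗ I) σ = ∑ pᵢ Aᵢ ⊗ Bᵢ` writes
`𝓔 = N ∑ pᵢ vec(Aᵢ) vec(Bᵢ)ᵀ`, where the density matrices `Aᵢ, Bᵢ` have Frobenius norm at most `1`.
If `𝓔` is singular the product of its singular values vanishes. Otherwise their sum is `tr(𝓔 U)`
for some unitary `U`, and each `|vec(Bᵢ)ᵀ U vec(Aᵢ)|` is at most `1` by Cauchy–Schwarz; hence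
`∑ sⱼ ≤ N` (the realignment criterion), and AM–GM turns this into `∏ sⱼ ≤ (N / N²)^(N²)`.
-/

open Matrix Kronecker
open scoped ComplexOrder

/-- The matrix representation `𝓔_{(ij)(αβ)} = Tr((|i⟩⟨j|)ᴴ E(|α⟩⟨β|))` of a map on the
standard operator bases. -/
def matrixRep {NA NB : ℕ}
    (E : Matrix (Fin NB) (Fin NB) ℂ →ₗ[ℂ] Matrix (Fin NA) (Fin NA) ℂ) :
    Matrix (Fin NA × Fin NA) (Fin NB × Fin NB) ℂ :=
  Matrix.of fun p q => E (Matrix.single q.1 q.2 1) p.1 p.2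

open WithLp

theorem Real.prod_le_arith_mean_pow {ι : Type*} [Fintype ι] {z : ι → ℝ} (hz : ∀ i, 0 ≤ z i) :
    ∏ i, z i ≤ ((∑ i, z i) / Fintype.card ι) ^ Fintype.card ι := by
  rcases isEmpty_or_nonempty ι with hι | hι
  · simp
  have hcard : (0 : ℝ) < Fintype.card ι := by exact_mod_cast Fintype.card_pos
  have h := Real.geom_mean_le_arith_mean Finset.univ (fun _ => 1) z (fun _ _ => zero_le_one)
    (by simpa using hcard) (fun i _ => hz i)
  simp only [Real.rpow_one, one_mul, Finset.sum_const, Finset.card_univ, nsmul_eq_mul,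
    mul_one] at h
  rwa [Real.rpow_inv_le_iff_of_pos (Finset.prod_nonneg fun i _ => hz i)
    (div_nonneg (Finset.sum_nonneg fun i _ => hz i) hcard.le) hcard, Real.rpow_natCast] at h

namespace Matrix

section EuclideanNorm

variable {𝕜 n : Type*} [RCLike 𝕜] [Fintype n]

theorem norm_toLp_star (x : n → 𝕜) : ‖toLp 2 (star x)‖ = ‖toLp 2 x‖ := by
  simp [EuclideanSpace.norm_eq]

theorem dotProduct_star_self_eq_norm_sq (x : n → 𝕜) : x ⬝ᵥ star x = (‖toLp 2 x‖ : 𝕜) ^ 2 := by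
  rw [← EuclideanSpace.inner_toLp_toLp, inner_self_eq_norm_sq_to_K]

theorem norm_dotProduct_le (x y : n → 𝕜) : ‖x ⬝ᵥ y‖ ≤ ‖toLp 2 x‖ * ‖toLp 2 y‖ := by
  have h := norm_inner_le_norm (𝕜 := 𝕜) (toLp 2 (star x)) (toLp 2 y)
  rwa [EuclideanSpace.inner_toLp_toLp, star_star, dotProduct_comm, norm_toLp_star] at h

theorem norm_toLp_mulVec_of_mem_unitaryGroup [DecidableEq n] {U : Matrix n n 𝕜}
    (hU : U ∈ unitaryGroup n 𝕜) (x : n → 𝕜) : ‖toLp 2 (U *ᵥ x)‖ = ‖toLp 2 x‖ := by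
  simpa using ContinuousLinearMap.norm_map_of_mem_unitary
    (Unitary.map_mem (toEuclideanCLM (n := n) (𝕜 := 𝕜)) hU) (toLp 2 x)

theorem norm_toLp_vec_vecMulVec (u w : n → 𝕜) :
    ‖toLp 2 (vec (vecMulVec u w))‖ = ‖toLp 2 u‖ * ‖toLp 2 w‖ := by
  simp only [EuclideanSpace.norm_eq, ← Real.sqrt_mul (Finset.sum_nonneg fun _ _ => sq_nonneg _),
    Finset.sum_mul_sum, Fintype.sum_prod_type, vec, vecMulVec_apply, norm_mul, mul_pow]
  rw [Finset.sum_comm]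

theorem PosSemidef.norm_toLp_vec_le {A : Matrix n n 𝕜} (hA : A.PosSemidef) :
    ‖toLp 2 (vec A)‖ ≤ ‖A.trace‖ := by
  obtain ⟨m, v, rfl⟩ := posSemidef_iff_eq_sum_vecMulVec.mp hA
  calc ‖toLp 2 (vec (∑ k, vecMulVec (v k) (star (v k))))‖
      ≤ ∑ k, ‖toLp 2 (v k)‖ ^ 2 := by
        rw [vec_sum, toLp_sum]
        refine (norm_sum_le _ _).trans_eq (Finset.sum_congr rfl fun k _ => ?_)
        rw [norm_toLp_vec_vecMulVec, norm_toLp_star, sq]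
    _ = ‖(∑ k, vecMulVec (v k) (star (v k))).trace‖ := by
        simp_rw [trace_sum, trace_vecMulVec, dotProduct_star_self_eq_norm_sq]
        norm_cast
        rw [abs_of_nonneg (by positivity)]

end EuclideanNorm

section SingularValues

variable {𝕜 m n ι : Type*} [RCLike 𝕜] [Fintype m] [Fintype n] [DecidableEq n] [Fintype ι]

/-- Indexed like the eigenvalues of `Mᴴ * M`, in no particular order
(unlike `LinearMap.singularValues`). -/
noncomputable def singularValues (M : Matrix m n 𝕜) (j : n) : ℝ :=
  √((isHermitian_conjTranspose_mul_self M).eigenvalues j)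

theorem singularValues_nonneg (M : Matrix m n 𝕜) (j : n) : 0 ≤ singularValues M j :=
  Real.sqrt_nonneg _

theorem singularValues_mul_self (M : Matrix m n 𝕜) (j : n) :
    singularValues M j * singularValues M j =
      (isHermitian_conjTranspose_mul_self M).eigenvalues j :=
  Real.mul_self_sqrt (eigenvalues_conjTranspose_mul_self_nonneg M j)

/-- The unitary is `V Wᴴ`, where `V` diagonalises `Mᴴ M` and `W = M V D⁻¹` with `D = diag(s)`. -/
theorem exists_mem_unitaryGroup_trace_mul_eq_sum_singularValues (M : Matrix n n 𝕜)
    (hM : ∀ j, singularValues M j ≠ 0) :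
    ∃ U ∈ unitaryGroup n 𝕜, (M * U).trace = ∑ j, (singularValues M j : 𝕜) := by
  set hH := isHermitian_conjTranspose_mul_self M
  set V : Matrix n n 𝕜 := (hH.eigenvectorUnitary : Matrix n n 𝕜)
  set D : Matrix n n 𝕜 := diagonal fun j => (singularValues M j : 𝕜)
  set Dinv : Matrix n n 𝕜 := diagonal fun j => ((singularValues M j)⁻¹ : 𝕜)
  have hDinv : Dinv * D = 1 := by
    rw [diagonal_mul_diagonal, ← diagonal_one]
    exact congrArg diagonal (funext fun j => inv_mul_cancel₀ (by exact_mod_cast hM j))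
  have hdiag : star V * (Mᴴ * M) * V = D * D := by
    have h := hH.conjStarAlgAut_star_eigenvectorUnitary
    rw [Unitary.conjStarAlgAut_star_apply] at h
    rw [h, diagonal_mul_diagonal]
    congr 1; funext j
    simp only [Function.comp_apply, ← singularValues_mul_self]
    push_cast; rfl
  set W := M * V * Dinv
  have hWMV : star W * M * V = D := by
    have hDinv_star : star Dinv = Dinv := by
      simp [Dinv, star_eq_conjTranspose, diagonal_conjTranspose]
    calc star W * M * V = Dinv * (star V * (Mᴴ * M) * V) := by
          simp only [W, star_mul, hDinv_star, star_eq_conjTranspose M, Matrix.mul_assoc]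
      _ = D := by rw [hdiag, ← Matrix.mul_assoc, hDinv, Matrix.one_mul]
  have hW : W ∈ unitaryGroup n 𝕜 := by
    rw [mem_unitaryGroup_iff']
    calc star W * W = star W * M * V * Dinv := by simp only [W, Matrix.mul_assoc]
      _ = 1 := by rw [hWMV, mul_eq_one_comm.mp hDinv]
  refine ⟨V * star W, mul_mem hH.eigenvectorUnitary.2 (Unitary.star_mem hW), ?_⟩
  rw [← Matrix.mul_assoc, trace_mul_comm, ← Matrix.mul_assoc, hWMV, trace_diagonal]

theorem norm_trace_mul_le_of_eq_sum_vecMulVec {M U : Matrix n n 𝕜} (hU : U ∈ unitaryGroup n 𝕜)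
    {c : ι → ℝ} {x y : ι → n → 𝕜} (hc : ∀ i, 0 ≤ c i) (hx : ∀ i, ‖toLp 2 (x i)‖ ≤ 1)
    (hy : ∀ i, ‖toLp 2 (y i)‖ ≤ 1) (hM : M = ∑ i, (c i : 𝕜) • vecMulVec (x i) (y i)) :
    ‖(M * U).trace‖ ≤ ∑ i, c i := by
  subst hM
  simp_rw [Matrix.sum_mul, trace_sum, smul_mul, trace_smul, vecMulVec_mul, trace_vecMulVec,
    ← mulVec_transpose]
  refine (norm_sum_le _ _).trans (Finset.sum_le_sum fun i _ => ?_)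
  rw [norm_smul, RCLike.norm_ofReal, abs_of_nonneg (hc i)]
  calc c i * ‖x i ⬝ᵥ (Uᵀ *ᵥ y i)‖ ≤ c i * (‖toLp 2 (x i)‖ * ‖toLp 2 (y i)‖) := by
        refine mul_le_mul_of_nonneg_left ?_ (hc i)
        rw [← norm_toLp_mulVec_of_mem_unitaryGroup (transpose_mem_unitaryGroup_iff.mpr hU) (y i)]
        exact norm_dotProduct_le _ _
    _ ≤ c i := mul_le_of_le_one_right (hc i) (mul_le_one₀ (hx i) (norm_nonneg _) (hy i))

theorem sum_singularValues_le_of_eq_sum_vecMulVec {M : Matrix n n 𝕜}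
    (hM₀ : ∀ j, singularValues M j ≠ 0) {c : ι → ℝ} {x y : ι → n → 𝕜} (hc : ∀ i, 0 ≤ c i)
    (hx : ∀ i, ‖toLp 2 (x i)‖ ≤ 1) (hy : ∀ i, ‖toLp 2 (y i)‖ ≤ 1)
    (hM : M = ∑ i, (c i : 𝕜) • vecMulVec (x i) (y i)) :
    ∑ j, singularValues M j ≤ ∑ i, c i := by
  obtain ⟨U, hU, htrace⟩ := exists_mem_unitaryGroup_trace_mul_eq_sum_singularValues M hM₀
  calc ∑ j, singularValues M j = ‖(M * U).trace‖ := by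
        rw [htrace, ← RCLike.ofReal_sum, RCLike.norm_ofReal,
          abs_of_nonneg (Finset.sum_nonneg fun j _ => singularValues_nonneg M j)]
    _ ≤ ∑ i, c i := norm_trace_mul_le_of_eq_sum_vecMulVec hU hc hx hy hM

theorem prod_singularValues_le_of_eq_sum_vecMulVec {M : Matrix n n 𝕜} {c : ι → ℝ}
    {x y : ι → n → 𝕜} (hc : ∀ i, 0 ≤ c i) (hx : ∀ i, ‖toLp 2 (x i)‖ ≤ 1)
    (hy : ∀ i, ‖toLp 2 (y i)‖ ≤ 1) (hM : M = ∑ i, (c i : 𝕜) • vecMulVec (x i) (y i)) :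
    ∏ j, singularValues M j ≤ ((∑ i, c i) / Fintype.card n) ^ Fintype.card n := by
  by_cases hM₀ : ∀ j, singularValues M j ≠ 0
  swap
  · obtain ⟨j, hj⟩ := not_forall_not.mp hM₀
    rw [Finset.prod_eq_zero (Finset.mem_univ j) hj]
    have := Finset.sum_nonneg fun i (_ : i ∈ Finset.univ) => hc i
    positivity
  calc ∏ j, singularValues M j
      ≤ ((∑ j, singularValues M j) / Fintype.card n) ^ Fintype.card n :=
        Real.prod_le_arith_mean_pow (singularValues_nonneg M)
    _ ≤ ((∑ i, c i) / Fintype.card n) ^ Fintype.card n := by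
        gcongr
        · exact div_nonneg (Finset.sum_nonneg fun j _ => singularValues_nonneg M j)
            (Nat.cast_nonneg _)
        · exact sum_singularValues_le_of_eq_sum_vecMulVec hM₀ hc hx hy hM

end SingularValues

end Matrix

/-- `|Φ⟩⟨Φ| / N` for `|Φ⟩ = vec 1 = ∑ⱼ |j⟩ ⊗ |j⟩`. -/
noncomputable def maxEntangledState (N : ℕ) : Matrix (Fin N × Fin N) (Fin N × Fin N) ℂ :=
  (N : ℂ)⁻¹ • vecMulVec (vec 1) (star (vec 1))

theorem maxEntangledState_posSemidef (N : ℕ) : (maxEntangledState N).PosSemidef :=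
  (posSemidef_vecMulVec_self_star _).smul (by positivity)

theorem trace_maxEntangledState {N : ℕ} (hN : N ≠ 0) : (maxEntangledState N).trace = 1 := by
  simp [maxEntangledState, trace_smul, trace_vecMulVec, dotProduct, vec, Fintype.sum_prod_type,
    one_apply, hN]

theorem tensorId_maxEntangledState_apply {NA NB : ℕ}
    (E : Matrix (Fin NB) (Fin NB) ℂ →ₗ[ℂ] Matrix (Fin NA) (Fin NA) ℂ) (a b : Fin NA)
    (j k : Fin NB) :
    tensorId E (maxEntangledState NB) (a, j) (b, k) = (NB : ℂ)⁻¹ * matrixRep E (a, b) (j, k) := by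
  have h : (of fun c d => maxEntangledState NB (c, j) (d, k)) = (NB : ℂ)⁻¹ • single j k 1 := by
    ext c d
    simp only [maxEntangledState, of_apply, Matrix.smul_apply, vecMulVec_apply, vec,
      Pi.star_apply, one_apply, single_apply, smul_eq_mul]
    split_ifs <;> simp_all
  simp only [tensorId, matrixRep, of_apply, h, map_smul, Matrix.smul_apply, smul_eq_mul]

theorem IsEntanglementBreaking.exists_matrixRep_eq_sum_vecMulVec {NA NB : ℕ}
    {E : Matrix (Fin NB) (Fin NB) ℂ →ₗ[ℂ] Matrix (Fin NA) (Fin NA) ℂ}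
    (hE : IsEntanglementBreaking E) (hNB : NB ≠ 0) :
    ∃ (m : ℕ) (c : Fin m → ℝ) (x : Fin m → Fin NA × Fin NA → ℂ)
      (y : Fin m → Fin NB × Fin NB → ℂ), (∀ i, 0 ≤ c i) ∧ ∑ i, c i = NB ∧
      (∀ i, ‖toLp 2 (x i)‖ ≤ 1) ∧ (∀ i, ‖toLp 2 (y i)‖ ≤ 1) ∧
      matrixRep E = ∑ i, (c i : ℂ) • vecMulVec (x i) (y i) := by
  obtain ⟨m, p, A, B, hp, hpsum, hA, hB, hsep⟩ :=
    hE NB _ (maxEntangledState_posSemidef NB) (trace_maxEntangledState hNB)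
  have hnorm {K : ℕ} {C : Matrix (Fin K) (Fin K) ℂ} (hC : C.PosSemidef ∧ C.trace = 1) :
      ‖toLp 2 (vec Cᵀ)‖ ≤ 1 := by
    simpa [trace_transpose, hC.2] using hC.1.transpose.norm_toLp_vec_le
  refine ⟨m, fun i => NB * p i, fun i => vec (A i)ᵀ, fun i => vec (B i)ᵀ,
    fun i => mul_nonneg (Nat.cast_nonneg NB) (hp i), by rw [← Finset.mul_sum, hpsum, mul_one],
    fun i => hnorm (hA i), fun i => hnorm (hB i), ?_⟩
  ext ⟨a, b⟩ ⟨j, k⟩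
  have h := tensorId_maxEntangledState_apply E a b j k
  rw [hsep, eq_inv_mul_iff_mul_eq₀ (Nat.cast_ne_zero.mpr hNB)] at h
  rw [← h]
  simp only [Matrix.sum_apply, Matrix.smul_apply, kroneckerMap_apply, vecMulVec_apply, vec,
    transpose_apply, smul_eq_mul, Finset.mul_sum]
  refine Finset.sum_congr rfl fun i _ => ?_
  push_cast
  ring

theorem stmt_18_general (N : ℕ) (hN : 1 ≤ N)
    (E : Matrix (Fin N) (Fin N) ℂ →ₗ[ℂ] Matrix (Fin N) (Fin N) ℂ)
    (heb : IsEntanglementBreaking E) :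
    ∏ j, Real.sqrt
        ((Matrix.posSemidef_conjTranspose_mul_self (matrixRep E)).1.eigenvalues j) ≤
      ((N : ℝ) / (N ^ 2 : ℕ)) ^ (N ^ 2 : ℕ) := by
  obtain ⟨m, c, x, y, hc, hcsum, hx, hy, hrep⟩ :=
    heb.exists_matrixRep_eq_sum_vecMulVec (Nat.one_le_iff_ne_zero.mp hN)
  have hcard : Fintype.card (Fin N × Fin N) = N ^ 2 := by simp [sq]
  have h := prod_singularValues_le_of_eq_sum_vecMulVec hc hx hy hrep
  rwa [hcsum, hcard] at h

/-- If a CPT map `E : M_{N}(ℂ) → M_{N}(ℂ)` (the case `N_A = N_B = N`) is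
entanglement breaking and its matrix representation `𝓔` has full rank `d = N²`, then
`det|𝓔| ≤ (N/d)^d`, where `det|𝓔|` (the product of the singular values of `𝓔`, i.e. the
volume-contraction rate of `E`) is the product of the square roots of the eigenvalues of
`𝓔ᴴ𝓔`. -/
theorem stmt_18 (N : ℕ) (hN : 1 ≤ N)
    (E : Matrix (Fin N) (Fin N) ℂ →ₗ[ℂ] Matrix (Fin N) (Fin N) ℂ)
    (hcp : IsCompletelyPositive E)
    (htp : ∀ M, (E M).trace = M.trace)
    (heb : IsEntanglementBreaking E)
    (hrank : (matrixRep E).rank = N ^ 2) :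
    ∏ j, Real.sqrt
        ((Matrix.posSemidef_conjTranspose_mul_self (matrixRep E)).1.eigenvalues j) ≤
      ((N : ℝ) / (N ^ 2 : ℕ)) ^ (N ^ 2 : ℕ) :=
  stmt_18_general N hN E heb
end
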